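/- arXiv:2412.19363 — 3 statements merged into one kernel-verified Lean document; each statement's English description precedes it below -/
import Mathlib

section
/- In the binary setting with P(z=1)=α and P(y=z)=p, the naive pooled estimator limit β^Naive defined by e^{β^Naive}/(1+e^{β^Naive}) = (αρ + αp + (1−α)(1−p))/(1+ρ) differs from the best-in-class β* (defined by e^{β*}/(1+e^{β*}) = αp+(1−α)(1−p)) whenever ρ > 0, α ≠ 1/2, and p ≠ 1. -/
/-- The naive pooled estimator limit `β^Naive`, defined by
`e^{β^Naive}/(1+e^{β^Naive}) = (αρ + αp + (1-α)(1-p))/(1+ρ)`, differs from the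
best-in-class `β*`, defined by `e^{β*}/(1+e^{β*}) = αp + (1-α)(1-p)`, whenever
`ρ > 0`, `α ≠ 1/2`, and `p ≠ 1`. -/
theorem naive_estimator_biased (α p ρ βNaive βStar : ℝ)
    (hα : α ∈ Set.Ioo (0:ℝ) 1) (hp : p ∈ Set.Ioo (0:ℝ) 1)
    (hρ : 0 < ρ) (hα2 : α ≠ 1/2) (hp1 : p ≠ 1)
    (hNaive : Real.exp βNaive / (1 + Real.exp βNaive) =
      (α * ρ + (α * p + (1 - α) * (1 - p))) / (1 + ρ))
    (hStar : Real.exp βStar / (1 + Real.exp βStar) = α * p + (1 - α) * (1 - p)) :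
    βNaive ≠ βStar := by
  intro h
  rw [h, hStar] at hNaive
  have h1 : (1:ℝ) + ρ ≠ 0 := by linarith
  have h2 : (α * ρ + (α * p + (1 - α) * (1 - p))) =
      (α * p + (1 - α) * (1 - p)) * (1 + ρ) := by
    field_simp at hNaive
    linarith [hNaive]
  have hα' : α ≠ 1/2 := hα2
  have : α = α * p + (1 - α) * (1 - p) := by
    have := mul_right_cancel₀ (ne_of_gt hρ) (by nlinarith : α * ρ = (α * p + (1 - α) * (1 - p)) * ρ)
    exact this
  have hp' : p < 1 := hp.2
  apply hα2
  nlinarith [this]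
end

section
/- Let σ_j(x;β), j = 0,…,k, be multinomial-logit probabilities with x_{(j)} ∈ ℝ^d, and let j̃ ∈ {1,…,k} attain max_j |βᵀx_{(j)}|. If βᵀx_{(j̃)} > 0, then log σ₀(x;β) ≤ −(k/(k+1))·|βᵀx_{(j̃)}|. -/
/-! Dropping every term of the denominator of `σ₀` except `e^{βᵀx_{(j̃)}}` already gives
`log σ₀ ≤ −βᵀx_{(j̃)}`, and for `βᵀx_{(j̃)} > 0` the factor `k/(k+1) ≤ 1` only weakens this. -/

open scoped BigOperators

/-- Multinomial-logit probability of the outside option `0`, with option utilities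
`βᵀx_{(ℓ)}` and outside utility `0`. -/
noncomputable def mnlProb0 {d k : ℕ} (x : Fin k → EuclideanSpace ℝ (Fin d))
    (β : EuclideanSpace ℝ (Fin d)) : ℝ :=
  1 / (1 + ∑ ℓ, Real.exp (inner ℝ (x ℓ) β : ℝ))

theorem Real.le_log_one_add_sum_exp {ι : Type*} [Fintype ι] (f : ι → ℝ) (i : ι) :
    f i ≤ Real.log (1 + ∑ j, Real.exp (f j)) := by
  have h_single : Real.exp (f i) ≤ ∑ j, Real.exp (f j) :=
    Finset.single_le_sum (fun j _ => (Real.exp_pos (f j)).le) (Finset.mem_univ i)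
  rw [Real.le_log_iff_exp_le (by positivity)]
  linarith

theorem log_mnlProb0 {d k : ℕ} (x : Fin k → EuclideanSpace ℝ (Fin d))
    (β : EuclideanSpace ℝ (Fin d)) :
    Real.log (mnlProb0 x β) = -Real.log (1 + ∑ ℓ, Real.exp (inner ℝ (x ℓ) β : ℝ)) := by
  rw [mnlProb0, one_div, Real.log_inv]

theorem log_mnlProb0_le_neg_inner {d k : ℕ} (x : Fin k → EuclideanSpace ℝ (Fin d))
    (β : EuclideanSpace ℝ (Fin d)) (j : Fin k) :
    Real.log (mnlProb0 x β) ≤ -(inner ℝ (x j) β : ℝ) := by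
  rw [log_mnlProb0, neg_le_neg_iff]
  exact Real.le_log_one_add_sum_exp (fun ℓ => (inner ℝ (x ℓ) β : ℝ)) j

theorem log_outside_prob_bound_general (d k : ℕ) (x : Fin k → EuclideanSpace ℝ (Fin d))
    (β : EuclideanSpace ℝ (Fin d)) (jt : Fin k)
    (hpos : 0 < (inner ℝ (x jt) β : ℝ)) :
    Real.log (mnlProb0 x β) ≤ -((k : ℝ) / (k + 1)) * |(inner ℝ (x jt) β : ℝ)| := by
  have hk : (k : ℝ) / (k + 1) ≤ 1 := div_le_one_of_le₀ (by linarith) (by positivity)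
  rw [abs_of_pos hpos, neg_mul]
  calc Real.log (mnlProb0 x β) ≤ -(inner ℝ (x jt) β : ℝ) := log_mnlProb0_le_neg_inner x β jt
    _ ≤ -((k : ℝ) / (k + 1) * inner ℝ (x jt) β) :=
      neg_le_neg (mul_le_of_le_one_left hpos.le hk)

/-- If `j̃` attains `max_j |βᵀx_{(j)}|` and `βᵀx_{(j̃)} > 0`, then
`log σ₀(x;β) ≤ −(k/(k+1))·|βᵀx_{(j̃)}|`. -/
theorem log_outside_prob_bound (d k : ℕ) (x : Fin k → EuclideanSpace ℝ (Fin d))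
    (β : EuclideanSpace ℝ (Fin d)) (jt : Fin k)
    (hmax : ∀ j, |(inner ℝ (x j) β : ℝ)| ≤ |(inner ℝ (x jt) β : ℝ)|)
    (hpos : 0 < (inner ℝ (x jt) β : ℝ)) :
    Real.log (mnlProb0 x β) ≤ -((k : ℝ) / (k + 1)) * |(inner ℝ (x jt) β : ℝ)| :=
  log_outside_prob_bound_general d k x β jt hpos
end

section
/- Let k > 0, v ∈ [0,k] and u ≥ 0. Then u − log(v+e^u) = u − log(v+1) − u/(v+1) − v e^w u²/(2(e^w+v)²) for some w between 0 and u, and consequently log(e^u/(v+e^u)) ≤ uk/(k+1). -/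
/-- For `k > 0`, `v ∈ [0,k]` and `u ≥ 0`: by the Lagrange form of the
second-order Taylor expansion of `t ↦ log(v + e^t)` around `0`, there is `w` between
`0` and `u` with
`u − log(v+e^u) = u − log(v+1) − u/(v+1) − v e^w u²/(2(e^w+v)²)`;
and consequently `log(e^u/(v+e^u)) ≤ u·k/(k+1)`. -/
theorem taylor_log_softmax_bound (k v u : ℝ) (hk : 0 < k) (hv0 : 0 ≤ v)
    (hvk : v ≤ k) (hu : 0 ≤ u) :
    (∃ w ∈ Set.uIcc (0:ℝ) u,
        u - Real.log (v + Real.exp u) =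
          u - Real.log (v + 1) - u / (v + 1) -
            v * Real.exp w * u ^ 2 / (2 * (Real.exp w + v) ^ 2)) ∧
      Real.log (Real.exp u / (v + Real.exp u)) ≤ u * k / (k + 1) := by
  have hv1 : (0:ℝ) < v + 1 := by linarith
  have hpos : ∀ t : ℝ, 0 < v + Real.exp t := fun t => by positivity
  have hf : ∀ t : ℝ, HasDerivAt (fun t => Real.log (v + Real.exp t))
      (Real.exp t / (v + Real.exp t)) t := by
    intro t
    exact ((Real.hasDerivAt_exp t).const_add v).log (hpos t).ne'
  have hf' : ∀ t : ℝ, HasDerivAt (fun t => Real.exp t / (v + Real.exp t))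
      (v * Real.exp t / (v + Real.exp t) ^ 2) t := by
    intro t
    have h1 : HasDerivAt (fun t => v + Real.exp t) (Real.exp t) t :=
      (Real.hasDerivAt_exp t).const_add v
    have h2 : HasDerivAt (fun t => Real.exp t / (v + Real.exp t)) _ t :=
      (Real.hasDerivAt_exp t).div h1 (hpos t).ne'
    convert h2 using 1
    ring
  set R : ℝ := Real.log (v + Real.exp u) - Real.log (v + 1) - u / (v + 1) with hR
  have key : ∃ w ∈ Set.uIcc (0:ℝ) u,
      v * Real.exp w * u ^ 2 / (2 * (Real.exp w + v) ^ 2) = R := by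
    rcases eq_or_lt_of_le hu with h | h
    · refine ⟨0, Set.left_mem_uIcc, ?_⟩
      simp [hR, ← h, Real.exp_zero]
    · -- u > 0 : Rolle on F, then MVT on f'
      have hu2 : (0:ℝ) < u ^ 2 := by positivity
      set C : ℝ := R / u ^ 2 with hC
      set F : ℝ → ℝ := fun t => Real.log (v + Real.exp t) - Real.log (v + 1)
        - t / (v + 1) - C * t ^ 2 with hF
      have hFd : ∀ t : ℝ, HasDerivAt F
          (Real.exp t / (v + Real.exp t) - 1 / (v + 1) - 2 * C * t) t := by
        intro t
        have h1 : HasDerivAt (fun t : ℝ => t / (v + 1)) (1 / (v + 1)) t := by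
          simpa using (hasDerivAt_id t).div_const (v + 1)
        have h2 : HasDerivAt (fun t : ℝ => C * t ^ 2) (2 * C * t) t := by
          have := ((hasDerivAt_pow 2 t).const_mul C)
          simpa [mul_comm, mul_assoc, mul_left_comm] using this
        exact (((hf t).sub_const _).sub h1).sub h2
      have hF0 : F 0 = 0 := by simp [hF]
      have hC2 : C * u ^ 2 = R := by rw [hC]; field_simp
      have hFu : F u = 0 := by
        simp only [hF, hC2, hR]; ring
      obtain ⟨c, hc, hc0⟩ := exists_hasDerivAt_eq_zero (f := F)
        (f' := fun t => Real.exp t / (v + Real.exp t) - 1 / (v + 1) - 2 * C * t) h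
        (fun t _ => (hFd t).continuousAt.continuousWithinAt) (hF0.trans hFu.symm)
        (fun t _ => hFd t)
      obtain ⟨w, hw, hweq⟩ := exists_hasDerivAt_eq_slope
        (fun t => Real.exp t / (v + Real.exp t))
        (fun t => v * Real.exp t / (v + Real.exp t) ^ 2) hc.1
        (fun t _ => (hf' t).continuousAt.continuousWithinAt)
        (fun t _ => hf' t)
      refine ⟨w, ?_, ?_⟩
      · rw [Set.uIcc_of_le hu]
        exact ⟨hw.1.le, hw.2.le.trans (hc.2.le)⟩
      · have hc1 : Real.exp c / (v + Real.exp c) - 1 / (v + 1) = 2 * C * c := by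
          linarith [hc0]
        have hne : ((v + Real.exp w) ^ 2 : ℝ) ≠ 0 := by positivity
        have h3 : v * Real.exp w / (v + Real.exp w) ^ 2 = 2 * C := by
          rw [hweq, Real.exp_zero, sub_zero, hc1, mul_div_assoc,
            div_self (ne_of_gt hc.1), mul_one]
        have h4 : v * Real.exp w = 2 * C * (v + Real.exp w) ^ 2 := by
          field_simp [hne] at h3
          linarith [h3]
        have h5 : v * Real.exp w * u ^ 2 = R * (2 * (v + Real.exp w) ^ 2) := by
          calc v * Real.exp w * u ^ 2 = 2 * C * (v + Real.exp w) ^ 2 * u ^ 2 := by rw [h4]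
          _ = (C * u ^ 2) * (2 * (v + Real.exp w) ^ 2) := by ring
          _ = R * (2 * (v + Real.exp w) ^ 2) := by rw [hC2]
        rw [show Real.exp w + v = v + Real.exp w by ring,
          div_eq_iff (by positivity : (2 * ((v + Real.exp w) ^ 2) : ℝ) ≠ 0)]
        linarith [h5]
  obtain ⟨w, hw, hwe⟩ := key
  have hwe' : u - Real.log (v + Real.exp u) =
      u - Real.log (v + 1) - u / (v + 1) -
        v * Real.exp w * u ^ 2 / (2 * (Real.exp w + v) ^ 2) := by
    rw [hwe, hR]; ring
  refine ⟨⟨w, hw, hwe'⟩, ?_⟩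
  have hlog : Real.log (Real.exp u / (v + Real.exp u)) = u - Real.log (v + Real.exp u) := by
    rw [Real.log_div (Real.exp_ne_zero u) (hpos u).ne', Real.log_exp]
  rw [hlog, hwe']
  have hT : 0 ≤ v * Real.exp w * u ^ 2 / (2 * (Real.exp w + v) ^ 2) := by positivity
  have hL : 0 ≤ Real.log (v + 1) := Real.log_nonneg (by linarith)
  have hdiv : u * v / (v + 1) ≤ u * k / (k + 1) := by
    rw [div_le_div_iff₀ hv1 (by linarith)]
    nlinarith
  have : u - u / (v + 1) = u * v / (v + 1) := by field_simp; ring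
  linarith [this, hdiv]
end
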